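/- Entropy bound from list concentration for product distributions: fix n ∈ ℕ, ℓ ∈ {1, …, n}, and ε ∈ [0, 1/4]. Let p_1, …, p_n ∈ [0,1] and let π be the product probability measure on {0,1}^n given by π(x) = ∏_{i=1}^n p_i^{x_i} (1−p_i)^{1−x_i}. If L ⊆ {0,1}^n is a set of cardinality exactly 2^{n−ℓ} with π(L) ≥ 2^{−εℓ}, then Σ_{i=1}^n h(p_i) ≤ n − (1−ε)²·ℓ/320; that is, the entropy of the product distribution is at most n − (1−ε)²ℓ/320. -/

import Mathlib

/-!
By Cauchy–Schwarz, `π(L)² ≤ |L| · Σₓ π(x)² = |L| · ∏ᵢ (pᵢ² + (1 - pᵢ)²)`, so the hypotheses give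
`Σᵢ log₂ (2 (pᵢ² + (1 - pᵢ)²)) ≥ (1 - 2ε) ℓ`. Each summand equals `log₂ (1 + (1 - 2pᵢ)²)`, which is
at most `(1 - 2pᵢ)² / ln 2 ≤ 6 (1 - h(pᵢ))`; hence `Σᵢ h(pᵢ) ≤ n - (1 - 2ε) ℓ / 6`.
-/

/-- Binary entropy function. -/
noncomputable def binEnt (p : ℝ) : ℝ :=
  -(p * Real.logb 2 p) - (1 - p) * Real.logb 2 (1 - p)

open Finset Real

lemma sum_prod_ite_eq_prod_add {ι R : Type*} [Fintype ι] [DecidableEq ι] [CommSemiring R]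
    (a b : ι → R) :
    ∑ x : ι → Bool, ∏ i, (if x i then a i else b i) = ∏ i, (a i + b i) := by
  rw [← Fintype.prod_sum fun i (j : Bool) => if j then a i else b i]
  simp only [Fintype.sum_bool, if_true, Bool.false_eq_true, if_false]

lemma sq_sum_prod_ite_le_card_mul_prod {ι : Type*} [Fintype ι] [DecidableEq ι] (a b : ι → ℝ)
    (L : Finset (ι → Bool)) :
    (∑ x ∈ L, ∏ i, (if x i then a i else b i)) ^ 2 ≤ (#L : ℝ) * ∏ i, (a i ^ 2 + b i ^ 2) :=
  calc (∑ x ∈ L, ∏ i, (if x i then a i else b i)) ^ 2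
      ≤ (#L : ℝ) * ∑ x ∈ L, (∏ i, (if x i then a i else b i)) ^ 2 := sq_sum_le_card_mul_sum_sq
    _ ≤ #L * ∑ x : ι → Bool, (∏ i, (if x i then a i else b i)) ^ 2 := by
      gcongr
      exact subset_univ L
    _ = #L * ∏ i, (a i ^ 2 + b i ^ 2) := by
      rw [← sum_prod_ite_eq_prod_add]
      congr 1
      refine sum_congr rfl fun x _ => ?_
      rw [← prod_pow]
      exact prod_congr rfl fun i _ => by split <;> rfl

lemma sub_le_sum_logb_two_mul_collision {ι : Type*} [Fintype ι] [DecidableEq ι] (p : ι → ℝ)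
    (L : Finset (ι → Bool)) (k s : ℝ) (hcard : (#L : ℝ) ≤ 2 ^ k)
    (hmass : (2 : ℝ) ^ (-s) ≤ ∑ x ∈ L, ∏ i, (if x i then p i else 1 - p i)) :
    Fintype.card ι - k - 2 * s ≤ ∑ i, logb 2 (2 * (p i ^ 2 + (1 - p i) ^ 2)) := by
  have hc : ∀ i, 0 < p i ^ 2 + (1 - p i) ^ 2 := fun i => by nlinarith [sq_nonneg (2 * p i - 1)]
  have hprod : 0 < ∏ i, (p i ^ 2 + (1 - p i) ^ 2) := prod_pos fun i _ => hc i
  have key : (2 : ℝ) ^ (-(2 * s)) ≤ 2 ^ k * ∏ i, (p i ^ 2 + (1 - p i) ^ 2) :=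
    calc (2 : ℝ) ^ (-(2 * s)) = ((2 : ℝ) ^ (-s)) ^ 2 := by
          rw [← rpow_natCast, ← rpow_mul zero_le_two]; ring_nf
      _ ≤ (∑ x ∈ L, ∏ i, (if x i then p i else 1 - p i)) ^ 2 := by gcongr
      _ ≤ #L * ∏ i, (p i ^ 2 + (1 - p i) ^ 2) := sq_sum_prod_ite_le_card_mul_prod _ _ L
      _ ≤ 2 ^ k * ∏ i, (p i ^ 2 + (1 - p i) ^ 2) := by gcongr
  have hlog := (logb_le_logb one_lt_two (by positivity) (by positivity)).2 key
  rw [logb_rpow two_pos (by norm_num), logb_mul (by positivity) hprod.ne',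
    logb_rpow two_pos (by norm_num), logb_prod _ _ fun i _ => (hc i).ne'] at hlog
  simp only [logb_mul two_ne_zero (hc _).ne', logb_self_eq_one one_lt_two, sum_add_distrib,
    sum_const, card_univ, nsmul_eq_mul, mul_one]
  linarith

lemma binEnt_one_sub (p : ℝ) : binEnt (1 - p) = binEnt p := by
  unfold binEnt
  rw [sub_sub_cancel]
  ring

lemma mul_log_two_mul (x : ℝ) : x * log (2 * x) = x * log 2 + x * log x := by
  rcases eq_or_ne x 0 with rfl | hx
  · simp
  · rw [log_mul two_ne_zero hx]
    ring

lemma log_two_mul_one_sub_binEnt (p : ℝ) :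
    log 2 * (1 - binEnt p) = p * log (2 * p) + (1 - p) * log (2 * (1 - p)) := by
  have : log 2 ≠ 0 := (log_pos one_lt_two).ne'
  rw [mul_log_two_mul, mul_log_two_mul]
  unfold binEnt logb
  field_simp
  ring

lemma sq_div_three_le_mul_log_add_mul_log {t : ℝ} (ht0 : 0 ≤ t) (ht1 : t ≤ 1) :
    t ^ 2 / 3 ≤ (1 - t) * log (1 - t) + (1 + t) * log (1 + t) := by
  have hminus : -t ≤ (1 - t) * log (1 - t) := by
    rcases ht1.eq_or_lt with rfl | ht1
    · simp
    · have hpos : 0 < 1 - t := sub_pos.2 ht1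
      calc -t = (1 - t) * (1 - (1 - t)⁻¹) := by field_simp; ring
        _ ≤ (1 - t) * log (1 - t) := by gcongr; exact one_sub_inv_le_log_of_pos hpos
  have hplus : (1 + t) * (2 * t / (t + 2)) ≤ (1 + t) * log (1 + t) := by
    gcongr
    exact le_log_one_add_of_nonneg ht0
  have hsum : -t + (1 + t) * (2 * t / (t + 2)) = t ^ 2 / (t + 2) := by
    field_simp
    ring
  have : t ^ 2 / 3 ≤ t ^ 2 / (t + 2) :=
    div_le_div_of_nonneg_left (sq_nonneg t) (by positivity) (by linarith)
  linarith

lemma sq_one_sub_two_mul_div_six_le_log_two_mul_one_sub_binEnt {p : ℝ} (hp0 : 0 ≤ p)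
    (hp1 : p ≤ 1) : (1 - 2 * p) ^ 2 / 6 ≤ log 2 * (1 - binEnt p) := by
  wlog hp : p ≤ 1 / 2 generalizing p
  · have := this (sub_nonneg.2 hp1) (by linarith) (by linarith)
    rw [binEnt_one_sub] at this
    linarith
  have h := sq_div_three_le_mul_log_add_mul_log (t := 1 - 2 * p) (by linarith) (by linarith)
  rw [log_two_mul_one_sub_binEnt, show 2 * p = 1 - (1 - 2 * p) by ring,
    show 2 * (1 - p) = 1 + (1 - 2 * p) by ring]
  linear_combination h / 2

lemma logb_two_mul_collision_le {p : ℝ} (hp0 : 0 ≤ p) (hp1 : p ≤ 1) :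
    logb 2 (2 * (p ^ 2 + (1 - p) ^ 2)) ≤ 6 * (1 - binEnt p) := by
  have hlog2 : 0 < log 2 := log_pos one_lt_two
  calc logb 2 (2 * (p ^ 2 + (1 - p) ^ 2)) ≤ (1 - 2 * p) ^ 2 / log 2 := by
        rw [logb, show 2 * (p ^ 2 + (1 - p) ^ 2) = 1 + (1 - 2 * p) ^ 2 by ring]
        gcongr
        linarith [log_le_sub_one_of_pos (show 0 < 1 + (1 - 2 * p) ^ 2 by positivity)]
    _ ≤ 6 * (1 - binEnt p) := by
        rw [div_le_iff₀ hlog2]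
        linarith [sq_one_sub_two_mul_div_six_le_log_two_mul_one_sub_binEnt hp0 hp1]

theorem entropy_bound_from_list_concentration_general
    (n ℓ : ℕ) (hℓn : ℓ ≤ n)
    (ε : ℝ) (hε : ε ∈ Set.Icc (0 : ℝ) (1 / 4))
    (p : Fin n → ℝ) (hp : ∀ i, p i ∈ Set.Icc (0 : ℝ) 1)
    (L : Finset (Fin n → Bool)) (hcard : L.card = 2 ^ (n - ℓ))
    (hmass : (2 : ℝ) ^ (-(ε * (ℓ : ℝ))) ≤
      ∑ x ∈ L, ∏ i, (if x i then p i else 1 - p i)) :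
    ∑ i, binEnt (p i) ≤ (n : ℝ) - (1 - ε) ^ 2 * (ℓ : ℝ) / 320 := by
  obtain ⟨hε0, hε1⟩ := hε
  have hcard_rpow : (#L : ℝ) ≤ 2 ^ ((n : ℝ) - ℓ) := by
    rw [hcard, ← Nat.cast_sub hℓn, rpow_natCast, Nat.cast_pow, Nat.cast_ofNat]
  have hconc := sub_le_sum_logb_two_mul_collision p L _ _ hcard_rpow hmass
  have hent : ∑ i, logb 2 (2 * (p i ^ 2 + (1 - p i) ^ 2)) ≤ 6 * (n - ∑ i, binEnt (p i)) := by
    calc ∑ i, logb 2 (2 * (p i ^ 2 + (1 - p i) ^ 2)) ≤ ∑ i, 6 * (1 - binEnt (p i)) :=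
          sum_le_sum fun i _ => logb_two_mul_collision_le (hp i).1 (hp i).2
      _ = 6 * (n - ∑ i, binEnt (p i)) := by simp [← mul_sum, sum_sub_distrib]
  have hconst : (1 - ε) ^ 2 * (ℓ : ℝ) / 320 ≤ (1 - 2 * ε) * ℓ / 6 := by
    have : (1 - ε) ^ 2 / 320 ≤ (1 - 2 * ε) / 6 := by nlinarith
    nlinarith [(Nat.cast_nonneg ℓ : (0 : ℝ) ≤ ℓ)]
  rw [Fintype.card_fin] at hconc
  linarith

/-- **Entropy bound from list concentration for product distributions**: if a list
`L ⊆ {0,1}ⁿ` of size exactly `2^{n−ℓ}` has mass at least `2^{−εℓ}` under the product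
Bernoulli distribution with parameters `p₁,…,pₙ`, then `Σᵢ h(pᵢ) ≤ n − (1−ε)²ℓ/320`. -/
theorem entropy_bound_from_list_concentration
    (n ℓ : ℕ) (hℓ1 : 1 ≤ ℓ) (hℓn : ℓ ≤ n)
    (ε : ℝ) (hε : ε ∈ Set.Icc (0 : ℝ) (1 / 4))
    (p : Fin n → ℝ) (hp : ∀ i, p i ∈ Set.Icc (0 : ℝ) 1)
    (L : Finset (Fin n → Bool)) (hcard : L.card = 2 ^ (n - ℓ))
    (hmass : (2 : ℝ) ^ (-(ε * (ℓ : ℝ))) ≤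
      ∑ x ∈ L, ∏ i, (if x i then p i else 1 - p i)) :
    ∑ i, binEnt (p i) ≤ (n : ℝ) - (1 - ε) ^ 2 * (ℓ : ℝ) / 320 :=
  entropy_bound_from_list_concentration_general n ℓ hℓn ε hε p hp L hcard hmass
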